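/- Let n be a positive integer, C an additive category, and E : C^op × C → Ab a biadditive functor. Let ⟨X•,δ⟩ and ⟨Y•,ρ⟩ be E-attached complexes and f• : ⟨X•,δ⟩ → ⟨Y•,ρ⟩ a morphism of E-attached complexes which is a homotopy equivalence of complexes. Then ⟨X•,δ⟩ is an n-exangle if and only if ⟨Y•,ρ⟩ is an n-exangle. -/

import Mathlib

/-!
Basic definitions for the theory of `n`-exangulated categories
(Herschend–Liu–Nakaoka): `(n+2)`-term complexes in an additive category,
morphisms of such complexes, homotopies, and homotopy equivalences.

A complex is recorded as a function `obj : ℕ → C` together with differentials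
`d i : obj i ⟶ obj (i+1)`; only the components in degrees `0, …, n+1`
(and the differentials `d 0, …, d n`) are relevant, which is why all
conditions are imposed only in that range.
-/

open CategoryTheory CategoryTheory.Limits Opposite

universe w v u

namespace NExangulated

variable (C : Type u) [Category.{v} C] [Preadditive C]

/-- An `(n+2)`-term complex `X^0 → X^1 → ⋯ → X^{n+1}` in `C`. -/
structure NComplex (n : ℕ) where
  /-- the objects; only `obj 0, …, obj (n+1)` are relevant -/
  obj : ℕ → C
  /-- the differentials -/
  d : ∀ i : ℕ, obj i ⟶ obj (i + 1)
  /-- `d^{i+1} ∘ d^i = 0` for `0 ≤ i ≤ n-1` -/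
  d_comp_d : ∀ i : ℕ, i + 1 ≤ n → d i ≫ d (i + 1) = 0

variable {C}
variable {n : ℕ}

/-- A morphism of `(n+2)`-term complexes. -/
structure NComplexHom (X Y : NComplex C n) where
  /-- the components; only `f 0, …, f (n+1)` are relevant -/
  f : ∀ i : ℕ, X.obj i ⟶ Y.obj i
  /-- compatibility with the differentials, for `0 ≤ i ≤ n` -/
  comm : ∀ i : ℕ, i ≤ n → f i ≫ Y.d i = X.d i ≫ f (i + 1)

/-- The identity morphism of complexes. -/
def NComplexHom.id (X : NComplex C n) : NComplexHom X X where
  f _ := 𝟙 _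
  comm _ _ := by simp

/-- Composition of morphisms of complexes (in diagrammatic order:
`f.comp g` is `g• ∘ f•`). -/
def NComplexHom.comp {X Y Z : NComplex C n} (f : NComplexHom X Y) (g : NComplexHom Y Z) :
    NComplexHom X Z where
  f i := f.f i ≫ g.f i
  comm i hi := by
    rw [Category.assoc, g.comm i hi, ← Category.assoc, f.comm i hi, Category.assoc]

/-- `φ` is a homotopy from `f` to `g`:  here `φ i : X^{i+1} ⟶ Y^i` plays the role of
the component `φ^{i+1}` (for `0 ≤ i ≤ n`, i.e. `1 ≤ i+1 ≤ n+1`). -/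
def IsHomotopy {X Y : NComplex C n} (f g : NComplexHom X Y)
    (φ : ∀ i : ℕ, X.obj (i + 1) ⟶ Y.obj i) : Prop :=
  (g.f 0 - f.f 0 = X.d 0 ≫ φ 0) ∧
    (∀ i : ℕ, i + 1 ≤ n →
      g.f (i + 1) - f.f (i + 1) = φ i ≫ Y.d i + X.d (i + 1) ≫ φ (i + 1)) ∧
    (g.f (n + 1) - f.f (n + 1) = φ n ≫ Y.d n)

/-- Two morphisms of complexes are homotopic. -/
def Homotopic {X Y : NComplex C n} (f g : NComplexHom X Y) : Prop :=
  ∃ φ, IsHomotopy f g φ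

/-- `g` is a homotopy inverse of `f`. -/
def IsHomotopyInverse {X Y : NComplex C n} (f : NComplexHom X Y) (g : NComplexHom Y X) : Prop :=
  Homotopic (f.comp g) (NComplexHom.id X) ∧ Homotopic (g.comp f) (NComplexHom.id Y)

/-- `f` is a homotopy equivalence of complexes. -/
def IsHomotopyEquiv {X Y : NComplex C n} (f : NComplexHom X Y) : Prop :=
  ∃ g, IsHomotopyInverse f g

/-- Exactness of a two-term sequence of (pointed) sets at the middle term:
the image of `f` equals the kernel of `g`. -/
def ExactAt {α β γ : Type*} [Zero γ] (f : α → β) (g : β → γ) : Prop :=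
  ∀ b : β, g b = 0 ↔ ∃ a : α, f a = b

end NExangulated
namespace NExangulated

variable {C : Type u} [Category.{v} C] [Preadditive C] {n : ℕ}

section E

variable (E : Cᵒᵖ ⥤ C ⥤ AddCommGrpCat.{w})

/-- `a_*δ := E(id, a)(δ)`. -/
def pushE {A A' B : C} (a : A ⟶ A') (δ : (E.obj (op B)).obj A) : (E.obj (op B)).obj A' :=
  (E.obj (op B)).map a δ

/-- `c^*δ := E(c, id)(δ)`. -/
def pullE {A B B' : C} (c : B' ⟶ B) (δ : (E.obj (op B)).obj A) : (E.obj (op B')).obj A :=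
  (E.map c.op).app A δ

/-- `⟨X, δ⟩` is an `E`-attached complex: `(d^0)_*δ = 0` and `(d^n)^*δ = 0`. -/
def IsAttached (X : NComplex C n) (δ : (E.obj (op (X.obj (n + 1)))).obj (X.obj 0)) : Prop :=
  pushE E (X.d 0) δ = 0 ∧ pullE E (X.d n) δ = 0

/-- `⟨X, δ⟩` is an `n`-exangle: for every object `Q` the two induced sequences of
abelian groups
`C(Q,X^0) → ⋯ → C(Q,X^{n+1}) → E(Q,X^0)` and
`C(X^{n+1},Q) → ⋯ → C(X^0,Q) → E(X^{n+1},Q)`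
are exact at every term having both an incoming and an outgoing map. -/
def IsExangle (X : NComplex C n) (δ : (E.obj (op (X.obj (n + 1)))).obj (X.obj 0)) : Prop :=
  (∀ Q : C,
      (∀ i : ℕ, i + 1 ≤ n →
        ExactAt (fun u : Q ⟶ X.obj i => u ≫ X.d i)
          (fun u : Q ⟶ X.obj (i + 1) => u ≫ X.d (i + 1))) ∧
      ExactAt (fun u : Q ⟶ X.obj n => u ≫ X.d n)
        (fun u : Q ⟶ X.obj (n + 1) => pullE E u δ)) ∧
  (∀ Q : C,
      (∀ i : ℕ, i + 1 ≤ n →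
        ExactAt (fun u : X.obj (i + 2) ⟶ Q => X.d (i + 1) ≫ u)
          (fun u : X.obj (i + 1) ⟶ Q => X.d i ≫ u)) ∧
      ExactAt (fun u : X.obj 1 ⟶ Q => X.d 0 ≫ u)
        (fun u : X.obj 0 ⟶ Q => pushE E u δ))

end E

end NExangulated

/-!
A homotopy `h ≃ 𝟙` fixes an attached `δ` on both ends, since `δ` is killed by `(d⁰)_*` and
`(dⁿ)^*`; hence a homotopy inverse `g` of `f` is again a morphism of attached complexes, and
the situation is symmetric. Exactness moves from `X` to `Y`: a cycle `v` of a sequence for `Y`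
is sent by `g` to a cycle for `X`, which lifts to some `u`, and then `u ≫ f + v ≫ ψ` lifts `v`,
where `ψ` is a homotopy `g ≫ f ≃ 𝟙`.
-/

namespace NExangulated

lemma ExactAt.of_lift {α β γ α' β' γ' : Type*} [Zero γ] [Zero γ'] {a : α → β} {b : β → γ}
    {a' : α' → β'} {b' : β' → γ'} (h' : ExactAt a' b') (G : β → β')
    (hba : ∀ x, b (a x) = 0) (hG : ∀ v, b v = 0 → b' (G v) = 0)
    (hlift : ∀ v u, b v = 0 → a' u = G v → ∃ x, a x = v) : ExactAt a b := by
  refine fun v => ⟨fun hv => ?_, fun ⟨x, hx⟩ => hx ▸ hba x⟩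
  obtain ⟨u, hu⟩ := (h' (G v)).1 (hG v hv)
  exact hlift v u hv hu

variable {C : Type u} [Category.{v} C] {E : Cᵒᵖ ⥤ C ⥤ AddCommGrpCat.{w}}

lemma pushE_comp {A A' A'' B : C} (a : A ⟶ A') (b : A' ⟶ A'') (δ : (E.obj (op B)).obj A) :
    pushE E (a ≫ b) δ = pushE E b (pushE E a δ) := by
  simp [pushE]

lemma pullE_comp {A B B' B'' : C} (c' : B'' ⟶ B') (c : B' ⟶ B) (δ : (E.obj (op B)).obj A) :
    pullE E (c' ≫ c) δ = pullE E c' (pullE E c δ) := by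
  simp [pullE]

lemma pushE_pullE {A A' B B' : C} (a : A ⟶ A') (c : B' ⟶ B) (δ : (E.obj (op B)).obj A) :
    pushE E a (pullE E c δ) = pullE E c (pushE E a δ) :=
  (NatTrans.naturality_apply (E.map c.op) a δ).symm

@[simp] lemma pushE_zero {A A' B : C} (a : A ⟶ A') : pushE E a (0 : (E.obj (op B)).obj A) = 0 :=
  map_zero _

@[simp] lemma pullE_zero {A B B' : C} (c : B' ⟶ B) : pullE E c (0 : (E.obj (op B)).obj A) = 0 :=
  map_zero _

@[simp] lemma pushE_id {A B : C} (δ : (E.obj (op B)).obj A) : pushE E (𝟙 A) δ = δ := by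
  simp [pushE]

@[simp] lemma pullE_id {A B : C} (δ : (E.obj (op B)).obj A) : pullE E (𝟙 B) δ = δ := by
  simp [pullE]

variable [Preadditive C] {n : ℕ}

lemma pushE_add [∀ B : Cᵒᵖ, (E.obj B).Additive] {A A' B : C} (a b : A ⟶ A')
    (δ : (E.obj (op B)).obj A) : pushE E (a + b) δ = pushE E a δ + pushE E b δ := by
  simp only [pushE, Functor.map_add, AddCommGrpCat.hom_add_apply]

lemma pullE_add [E.Additive] {A B B' : C} (c c' : B' ⟶ B) (δ : (E.obj (op B)).obj A) :
    pullE E (c + c') δ = pullE E c δ + pullE E c' δ := by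
  simp only [pullE, op_add, Functor.map_add, NatTrans.app_add, AddCommGrpCat.hom_add_apply]

@[simp] lemma NComplexHom.comp_f {X Y Z : NComplex C n} (f : NComplexHom X Y)
    (g : NComplexHom Y Z) (i : ℕ) : (f.comp g).f i = f.f i ≫ g.f i := rfl

@[simp] lemma NComplexHom.id_f (X : NComplex C n) (i : ℕ) :
    (NComplexHom.id X).f i = 𝟙 (X.obj i) := rfl

section IsHomotopy

variable {X Y : NComplex C n} {f g : NComplexHom X Y} {φ : ∀ i : ℕ, X.obj (i + 1) ⟶ Y.obj i}

lemma IsHomotopy.f_zero_eq (h : IsHomotopy f g φ) : g.f 0 = f.f 0 + X.d 0 ≫ φ 0 :=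
  eq_add_of_sub_eq' h.1

lemma IsHomotopy.f_succ_eq (h : IsHomotopy f g φ) {i : ℕ} (hi : i + 1 ≤ n) :
    g.f (i + 1) = f.f (i + 1) + (φ i ≫ Y.d i + X.d (i + 1) ≫ φ (i + 1)) :=
  eq_add_of_sub_eq' (h.2.1 i hi)

lemma IsHomotopy.f_last_eq (h : IsHomotopy f g φ) : g.f (n + 1) = f.f (n + 1) + φ n ≫ Y.d n :=
  eq_add_of_sub_eq' h.2.2

end IsHomotopy

section Attached

variable {X Y : NComplex C n} {δ : (E.obj (op (X.obj (n + 1)))).obj (X.obj 0)}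
  {ρ : (E.obj (op (Y.obj (n + 1)))).obj (Y.obj 0)}

lemma pushE_f_zero_of_homotopic_id [∀ B : Cᵒᵖ, (E.obj B).Additive] (hX : IsAttached E X δ)
    {h : NComplexHom X X} (hh : Homotopic h (NComplexHom.id X)) : pushE E (h.f 0) δ = δ := by
  obtain ⟨φ, hφ⟩ := hh
  simpa [pushE_add, pushE_comp, hX.1] using (congrArg (pushE E · δ) hφ.f_zero_eq).symm

lemma pullE_f_last_of_homotopic_id [E.Additive] (hX : IsAttached E X δ)
    {h : NComplexHom X X} (hh : Homotopic h (NComplexHom.id X)) :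
    pullE E (h.f (n + 1)) δ = δ := by
  obtain ⟨φ, hφ⟩ := hh
  simpa [pullE_add, pullE_comp, hX.2] using (congrArg (pullE E · δ) hφ.f_last_eq).symm

lemma IsHomotopyInverse.pushE_eq_pullE [E.Additive] [∀ B : Cᵒᵖ, (E.obj B).Additive]
    {f : NComplexHom X Y} {g : NComplexHom Y X} (hfg : IsHomotopyInverse f g)
    (hX : IsAttached E X δ) (hY : IsAttached E Y ρ)
    (hf : pushE E (f.f 0) δ = pullE E (f.f (n + 1)) ρ) :
    pushE E (g.f 0) ρ = pullE E (g.f (n + 1)) δ :=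
  calc pushE E (g.f 0) ρ = pushE E (g.f 0) (pullE E ((g.comp f).f (n + 1)) ρ) := by
        rw [pullE_f_last_of_homotopic_id hY hfg.2]
    _ = pullE E (g.f (n + 1)) (pushE E ((f.comp g).f 0) δ) := by
        rw [NComplexHom.comp_f, NComplexHom.comp_f, pullE_comp, ← hf, pushE_comp, pushE_pullE]
    _ = pullE E (g.f (n + 1)) δ := by rw [pushE_f_zero_of_homotopic_id hX hfg.1]

end Attached

section Transfer

variable {X Y : NComplex C n} {f : NComplexHom X Y} {g : NComplexHom Y X}
  {ψ : ∀ i : ℕ, Y.obj (i + 1) ⟶ Y.obj i}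

lemma exactAt_comp_d_of_homotopy (hψ : IsHomotopy (g.comp f) (NComplexHom.id Y) ψ) (Q : C)
    {i : ℕ} (hi : i + 1 ≤ n)
    (hX : ExactAt (fun u : Q ⟶ X.obj i => u ≫ X.d i) (fun u => u ≫ X.d (i + 1))) :
    ExactAt (fun u : Q ⟶ Y.obj i => u ≫ Y.d i) (fun u => u ≫ Y.d (i + 1)) := by
  refine hX.of_lift (· ≫ g.f (i + 1)) (fun u => by simp [Y.d_comp_d i hi])
    (fun v hv => by simp [g.comm (i + 1) hi, reassoc_of% hv]) fun v u hv hu => ?_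
  refine ⟨u ≫ f.f i + v ≫ ψ i, ?_⟩
  calc (u ≫ f.f i + v ≫ ψ i) ≫ Y.d i
      = v ≫ g.f (i + 1) ≫ f.f (i + 1) + v ≫ ψ i ≫ Y.d i + (v ≫ Y.d (i + 1)) ≫ ψ (i + 1) := by
        simp [f.comm i (by omega), reassoc_of% hu, hv]
    _ = v := by simpa [add_assoc] using (congrArg (v ≫ ·) (hψ.f_succ_eq hi)).symm

lemma exactAt_d_comp_of_homotopy (hψ : IsHomotopy (g.comp f) (NComplexHom.id Y) ψ) (Q : C)
    {i : ℕ} (hi : i + 1 ≤ n)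
    (hX : ExactAt (fun u : X.obj (i + 2) ⟶ Q => X.d (i + 1) ≫ u) (fun u => X.d i ≫ u)) :
    ExactAt (fun u : Y.obj (i + 2) ⟶ Q => Y.d (i + 1) ≫ u) (fun u => Y.d i ≫ u) := by
  refine hX.of_lift (f.f (i + 1) ≫ ·) (fun u => by simp [reassoc_of% Y.d_comp_d i hi])
    (fun v hv => by simp [← reassoc_of% f.comm i (by omega), hv]) fun v u hv hu => ?_
  refine ⟨g.f (i + 2) ≫ u + ψ (i + 1) ≫ v, ?_⟩
  calc Y.d (i + 1) ≫ (g.f (i + 2) ≫ u + ψ (i + 1) ≫ v)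
      = g.f (i + 1) ≫ f.f (i + 1) ≫ v + ψ i ≫ Y.d i ≫ v + Y.d (i + 1) ≫ ψ (i + 1) ≫ v := by
        simp [← reassoc_of% g.comm (i + 1) hi, hu, hv]
    _ = v := by simpa [add_assoc] using (congrArg (· ≫ v) (hψ.f_succ_eq hi)).symm

variable {δ : (E.obj (op (X.obj (n + 1)))).obj (X.obj 0)}
  {ρ : (E.obj (op (Y.obj (n + 1)))).obj (Y.obj 0)}

lemma exactAt_comp_d_pullE_of_homotopy (hY : IsAttached E Y ρ)
    (hg : pushE E (g.f 0) ρ = pullE E (g.f (n + 1)) δ)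
    (hψ : IsHomotopy (g.comp f) (NComplexHom.id Y) ψ) (Q : C)
    (hX : ExactAt (fun u : Q ⟶ X.obj n => u ≫ X.d n) (fun u => pullE E u δ)) :
    ExactAt (fun u : Q ⟶ Y.obj n => u ≫ Y.d n) (fun u => pullE E u ρ) := by
  refine hX.of_lift (· ≫ g.f (n + 1)) (fun u => by simp [pullE_comp, hY.2])
    (fun v hv => by rw [pullE_comp, ← hg, ← pushE_pullE, hv, pushE_zero]) fun v u hv hu => ?_
  refine ⟨u ≫ f.f n + v ≫ ψ n, ?_⟩
  calc (u ≫ f.f n + v ≫ ψ n) ≫ Y.d n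
      = v ≫ g.f (n + 1) ≫ f.f (n + 1) + v ≫ ψ n ≫ Y.d n := by
        simp [f.comm n le_rfl, reassoc_of% hu]
    _ = v := by simpa using (congrArg (v ≫ ·) hψ.f_last_eq).symm

lemma exactAt_d_comp_pushE_of_homotopy (hY : IsAttached E Y ρ)
    (hf : pushE E (f.f 0) δ = pullE E (f.f (n + 1)) ρ)
    (hψ : IsHomotopy (g.comp f) (NComplexHom.id Y) ψ) (Q : C)
    (hX : ExactAt (fun u : X.obj 1 ⟶ Q => X.d 0 ≫ u) (fun u => pushE E u δ)) :
    ExactAt (fun u : Y.obj 1 ⟶ Q => Y.d 0 ≫ u) (fun u => pushE E u ρ) := by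
  refine hX.of_lift (f.f 0 ≫ ·) (fun u => by simp [pushE_comp, hY.1])
    (fun v hv => by rw [pushE_comp, hf, pushE_pullE, hv, pullE_zero]) fun v u hv hu => ?_
  refine ⟨g.f 1 ≫ u + ψ 0 ≫ v, ?_⟩
  calc Y.d 0 ≫ (g.f 1 ≫ u + ψ 0 ≫ v) = g.f 0 ≫ f.f 0 ≫ v + Y.d 0 ≫ ψ 0 ≫ v := by
        simp [← reassoc_of% g.comm 0 n.zero_le, hu]
    _ = v := by simpa using (congrArg (· ≫ v) hψ.f_zero_eq).symm

lemma IsExangle.of_homotopy_retraction (hY : IsAttached E Y ρ)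
    (hf : pushE E (f.f 0) δ = pullE E (f.f (n + 1)) ρ)
    (hg : pushE E (g.f 0) ρ = pullE E (g.f (n + 1)) δ)
    (hψ : IsHomotopy (g.comp f) (NComplexHom.id Y) ψ) (hXe : IsExangle E X δ) :
    IsExangle E Y ρ :=
  ⟨fun Q => ⟨fun _ hi => exactAt_comp_d_of_homotopy hψ Q hi ((hXe.1 Q).1 _ hi),
      exactAt_comp_d_pullE_of_homotopy hY hg hψ Q (hXe.1 Q).2⟩,
    fun Q => ⟨fun _ hi => exactAt_d_comp_of_homotopy hψ Q hi ((hXe.2 Q).1 _ hi),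
      exactAt_d_comp_pushE_of_homotopy hY hf hψ Q (hXe.2 Q).2⟩⟩

end Transfer

end NExangulated

namespace NExangulated

variable {C : Type u} [Category.{v} C] [Preadditive C] [HasFiniteBiproducts C] {n : ℕ}

/-- If `f• : ⟨X•,δ⟩ → ⟨Y•,ρ⟩` is a morphism of `E`-attached
complexes which is a homotopy equivalence of complexes, then `⟨X•,δ⟩` is an
`n`-exangle if and only if `⟨Y•,ρ⟩` is. -/
theorem statement_4 (hn : 0 < n) (E : Cᵒᵖ ⥤ C ⥤ AddCommGrpCat.{w})
    [E.Additive] [∀ B : Cᵒᵖ, (E.obj B).Additive]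
    (X Y : NComplex C n)
    (δ : (E.obj (op (X.obj (n + 1)))).obj (X.obj 0))
    (ρ : (E.obj (op (Y.obj (n + 1)))).obj (Y.obj 0))
    (hX : IsAttached E X δ) (hY : IsAttached E Y ρ)
    (f : NComplexHom X Y)
    (hf : pushE E (f.f 0) δ = pullE E (f.f (n + 1)) ρ)
    (hfeq : IsHomotopyEquiv f) :
    IsExangle E X δ ↔ IsExangle E Y ρ := by
  obtain ⟨g, hfg⟩ := hfeq
  have hg : pushE E (g.f 0) ρ = pullE E (g.f (n + 1)) δ := hfg.pushE_eq_pullE hX hY hf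
  obtain ⟨⟨φ, hφ⟩, ⟨ψ, hψ⟩⟩ := hfg
  exact ⟨IsExangle.of_homotopy_retraction hY hf hg hψ,
    IsExangle.of_homotopy_retraction hX hg hf hφ⟩

end NExangulated
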